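/- Let N ≥ 2 and let s and M be positive integers. Suppose that every integer a with 2 ≤ a ≤ s is coprime to N and satisfies a^M ≡ 1 (mod N). Then M ≥ s. -/

import Mathlib

/-! Every integer in `[2, s]` is coprime to `N`, so every prime divisor `p` of `N` exceeds `s`.
Hence `1, …, s` stay distinct in `𝔽_p`, and all of them are roots of `X ^ M - 1`,
which has at most `M` roots in a field. -/

open Polynomial

theorem Finset.card_le_of_forall_pow_eq_one {R : Type*} [CommRing R] [IsDomain R] {M : ℕ}
    (hM : 0 < M) {S : Finset R} (hS : ∀ x ∈ S, x ^ M = 1) : S.card ≤ M := by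
  classical
  calc S.card ≤ (nthRootsFinset M (1 : R)).card :=
        Finset.card_le_card fun x hx => (mem_nthRootsFinset hM 1).2 (hS x hx)
    _ ≤ M := (Multiset.toFinset_card_le _).trans (card_nthRoots M 1)

theorem ZMod.natCast_injOn_Iio (n : ℕ) : Set.InjOn (Nat.cast : ℕ → ZMod n) (Set.Iio n) :=
  fun a ha b hb hab => by
    rwa [ZMod.natCast_eq_natCast_iff', Nat.mod_eq_of_lt ha, Nat.mod_eq_of_lt hb] at hab

theorem Nat.lt_of_prime_dvd_of_forall_coprime {N s p : ℕ} (hp : p.Prime) (hpN : p ∣ N)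
    (h : ∀ a, 2 ≤ a → a ≤ s → Nat.Coprime a N) : s < p := by
  by_contra! hps
  exact hp.one_lt.ne' ((h p hp.two_le hps).eq_one_of_dvd hpN)

theorem M_ge_s_of_pow_eq_one_mod_N_general
    (N s M : ℕ) (hN : 2 ≤ N) (hM : 0 < M)
    (h : ∀ a : ℕ, 2 ≤ a → a ≤ s → Nat.Coprime a N ∧ a ^ M ≡ 1 [MOD N]) :
    s ≤ M := by
  obtain ⟨p, hp, hpN⟩ := Nat.exists_prime_and_dvd (by omega : N ≠ 1)
  have : Fact p.Prime := ⟨hp⟩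
  have hsp : s < p := Nat.lt_of_prime_dvd_of_forall_coprime hp hpN fun a ha has => (h a ha has).1
  have hinj : Set.InjOn (Nat.cast : ℕ → ZMod p) (Finset.Icc 1 s) :=
    (ZMod.natCast_injOn_Iio p).mono fun a ha => by
      simp only [Finset.coe_Icc, Set.mem_Icc] at ha
      exact Set.mem_Iio.2 (by omega)
  have hroots : ∀ a ∈ Finset.Icc 1 s, (a : ZMod p) ^ M = 1 := by
    intro a ha
    rw [Finset.mem_Icc] at ha
    obtain rfl | ha2 : a = 1 ∨ 2 ≤ a := by omega
    · simp
    · exact_mod_cast (ZMod.natCast_eq_natCast_iff _ _ _).2 ((h a ha2 ha.2).2.of_dvd hpN)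
  calc s = ((Finset.Icc 1 s).image (Nat.cast : ℕ → ZMod p)).card := by
        rw [Finset.card_image_of_injOn hinj, Nat.card_Icc, Nat.add_sub_cancel]
    _ ≤ M := Finset.card_le_of_forall_pow_eq_one hM (Finset.forall_mem_image.2 hroots)

/-- Let `N ≥ 2` and `s`, `M` positive integers. Suppose every integer `2 ≤ a ≤ s` is
coprime to `N` and satisfies `a^M ≡ 1 (mod N)`. Then `M ≥ s`. -/
theorem M_ge_s_of_pow_eq_one_mod_N
    (N s M : ℕ) (hN : 2 ≤ N) (hs : 0 < s) (hM : 0 < M)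
    (h : ∀ a : ℕ, 2 ≤ a → a ≤ s → Nat.Coprime a N ∧ a ^ M ≡ 1 [MOD N]) :
    s ≤ M :=
  M_ge_s_of_pow_eq_one_mod_N_general N s M hN hM h
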